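/- arXiv:2004.09018 — 3 statements merged into one kernel-verified Lean document; each statement's English description precedes it below -/
import Mathlib

section
/- Let Ω0 be the covariance matrix of Y = (Y_1,…,Y_p) and let Γ0 be the covariance matrix of W, where W_i = Y_i − (1/p)Σ_{k=1}^p Y_k. Then Γ0 = G Ω0 G where G = I_p − (1/p) 1 1^T, and consequently ‖Ω0 − Γ0‖_max ≤ 3 p^{-1} ‖Ω0‖_1, where ‖·‖_max is the entrywise supremum norm and ‖·‖_1 is the maximum absolute column sum. -/
open MeasureTheory

/-- The covariance of two real random variables. -/
noncomputable def cov {α : Type*} [MeasurableSpace α] (μ : Measure α) (f g : α → ℝ) : ℝ :=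
  ∫ x, (f x - ∫ y, f y ∂μ) * (g x - ∫ y, g y ∂μ) ∂μ

/-!
Covariance is bilinear on `L²`, so the covariance matrix of a linear image `A Y` is `A Ω Aᵀ`;
the centred vector is `W = G Y` with `G` symmetric, whence `Γ₀ = G Ω₀ G`. Writing
`G = 1 - p⁻¹ J` with `J` the all-ones matrix, `Ω₀ - G Ω₀ G` has entries
`p⁻¹ (column sum j) + p⁻¹ (row sum i) - p⁻² (total sum)`; by symmetry of `Ω₀` each of the
two line sums is at most `‖Ω₀‖₁`, and the total sum at most `p ‖Ω₀‖₁`.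
-/

section Covariance

open ProbabilityTheory Matrix

variable {α : Type*} [MeasurableSpace α] {μ : Measure α}

lemma cov_eq_covariance (f g : α → ℝ) : cov μ f g = covariance f g μ := rfl

lemma cov_comm (f g : α → ℝ) : cov μ f g = cov μ g f := covariance_comm f g

theorem cov_mulVec_apply [IsFiniteMeasure μ] {ι κ : Type*} [Fintype κ] (A : Matrix ι κ ℝ)
    {Y : α → κ → ℝ} (hY : ∀ k, MemLp (fun x => Y x k) 2 μ) (i j : ι) :
    cov μ (fun x => (A *ᵥ Y x) i) (fun x => (A *ᵥ Y x) j)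
      = (A * of (fun k l => cov μ (fun x => Y x k) (fun x => Y x l)) * Aᵀ) i j := by
  simp only [mulVec, dotProduct, cov_eq_covariance]
  rw [covariance_fun_sum_fun_sum (fun k => (hY k).const_mul (A i k))
    (fun l => (hY l).const_mul (A j l))]
  simp only [covariance_const_mul_left, covariance_const_mul_right, mul_apply, of_apply,
    transpose_apply, Finset.sum_mul]
  rw [Finset.sum_comm]
  exact Finset.sum_congr rfl fun k _ => Finset.sum_congr rfl fun l _ => by ring

end Covariance

section Centering

open Matrix Finset

noncomputable def centeringMatrix (n : Type*) [Fintype n] [DecidableEq n] : Matrix n n ℝ :=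
  1 - (Fintype.card n : ℝ)⁻¹ • of (fun _ _ => 1)

variable {n : Type*} [Fintype n]

lemma abs_sum_apply_le_iSup_sum_abs (Ω : Matrix n n ℝ) (j : n) :
    |∑ k, Ω k j| ≤ ⨆ j', ∑ i', |Ω i' j'| :=
  (abs_sum_le_sum_abs _ _).trans <|
    le_ciSup (f := fun j' => ∑ i', |Ω i' j'|) (Set.finite_range _).bddAbove j

lemma abs_sum_sum_le_card_mul_iSup_sum_abs (Ω : Matrix n n ℝ) :
    |∑ k, ∑ l, Ω k l| ≤ Fintype.card n * ⨆ j', ∑ i', |Ω i' j'| :=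
  calc |∑ k, ∑ l, Ω k l| = |∑ l, ∑ k, Ω k l| := congrArg _ sum_comm
    _ ≤ ∑ l, |∑ k, Ω k l| := abs_sum_le_sum_abs _ _
    _ ≤ ∑ _l : n, ⨆ j', ∑ i', |Ω i' j'| :=
      sum_le_sum fun l _ => abs_sum_apply_le_iSup_sum_abs Ω l
    _ = Fintype.card n * ⨆ j', ∑ i', |Ω i' j'| := by simp

variable [DecidableEq n]

lemma centeringMatrix_transpose : (centeringMatrix n)ᵀ = centeringMatrix n := by
  ext i j
  simp [centeringMatrix, one_apply, eq_comm]

lemma centeringMatrix_mulVec_apply (v : n → ℝ) (i : n) :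
    (centeringMatrix n *ᵥ v) i = v i - (Fintype.card n : ℝ)⁻¹ * ∑ k, v k := by
  simp only [centeringMatrix, sub_mulVec, one_mulVec, smul_mulVec, Pi.sub_apply, Pi.smul_apply,
    smul_eq_mul]
  simp [mulVec, dotProduct]

lemma centeringMatrix_mul_mul_apply (Ω : Matrix n n ℝ) (i j : n) :
    (centeringMatrix n * Ω * centeringMatrix n) i j
      = Ω i j - (Fintype.card n : ℝ)⁻¹ * ∑ k, Ω k j - (Fintype.card n : ℝ)⁻¹ * ∑ l, Ω i l
        + (Fintype.card n : ℝ)⁻¹ ^ 2 * ∑ k, ∑ l, Ω k l := by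
  set c := (Fintype.card n : ℝ)⁻¹
  have hexpand : centeringMatrix n * Ω * centeringMatrix n
      = Ω - c • (of (fun _ _ => 1) * Ω) - c • (Ω * of (fun _ _ => 1))
        + c ^ 2 • (of (fun _ _ => 1) * Ω * of (fun _ _ => 1)) := by
    simp only [centeringMatrix, sub_mul, mul_sub, one_mul, mul_one, Matrix.smul_mul,
      Matrix.mul_smul, smul_smul, sq, Matrix.mul_assoc]
    abel
  rw [hexpand]
  simp only [Matrix.add_apply, Matrix.sub_apply, Matrix.smul_apply, mul_apply, of_apply, one_mul,
    mul_one, smul_eq_mul, sum_comm (f := fun k l => Ω k l)]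

lemma abs_sub_centeringMatrix_mul_mul_apply_le {Ω : Matrix n n ℝ} (hΩ : Ω.IsSymm) (i j : n) :
    |Ω i j - (centeringMatrix n * Ω * centeringMatrix n) i j|
      ≤ 3 * (Fintype.card n : ℝ)⁻¹ * ⨆ j', ∑ i', |Ω i' j'| := by
  have : Nonempty n := ⟨i⟩
  have hcard : (Fintype.card n : ℝ) ≠ 0 := Nat.cast_ne_zero.mpr Fintype.card_ne_zero
  set c := (Fintype.card n : ℝ)⁻¹ with hc
  set M := ⨆ j', ∑ i', |Ω i' j'|
  have hc0 : 0 ≤ c := by positivity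
  have hrow : ∑ l, Ω i l = ∑ l, Ω l i := sum_congr rfl fun l _ => (hΩ.apply i l).symm
  rw [centeringMatrix_mul_mul_apply, hrow]
  calc |Ω i j - (Ω i j - c * ∑ k, Ω k j - c * ∑ l, Ω l i + c ^ 2 * ∑ k, ∑ l, Ω k l)|
      = |c * ∑ k, Ω k j + c * ∑ l, Ω l i - c ^ 2 * ∑ k, ∑ l, Ω k l| := by ring_nf
    _ ≤ c * |∑ k, Ω k j| + c * |∑ l, Ω l i| + c ^ 2 * |∑ k, ∑ l, Ω k l| := by
      refine ((abs_sub _ _).trans (add_le_add_left (abs_add_le _ _) _)).trans_eq ?_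
      rw [abs_mul, abs_mul, abs_mul, abs_of_nonneg hc0, abs_of_nonneg (pow_nonneg hc0 2)]
    _ ≤ c * M + c * M + c ^ 2 * (Fintype.card n * M) := by
      gcongr
      exacts [abs_sum_apply_le_iSup_sum_abs Ω j, abs_sum_apply_le_iSup_sum_abs Ω i,
        abs_sum_sum_le_card_mul_iSup_sum_abs Ω]
    _ = 3 * c * M := by rw [hc]; field_simp; ring

end Centering

theorem stmt_2_general {α : Type*} [MeasurableSpace α] (μ : Measure α) [IsProbabilityMeasure μ]
    (p : ℕ) (Y W : α → Fin p → ℝ)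
    (hY : ∀ i, MemLp (fun x => Y x i) 2 μ)
    (hW : ∀ x i, W x i = Y x i - (p : ℝ)⁻¹ * ∑ k, Y x k)
    (Ω0 Γ0 G : Matrix (Fin p) (Fin p) ℝ)
    (hΩ : ∀ i j, Ω0 i j = cov μ (fun x => Y x i) (fun x => Y x j))
    (hΓ : ∀ i j, Γ0 i j = cov μ (fun x => W x i) (fun x => W x j))
    (hG : G = 1 - (p : ℝ)⁻¹ • Matrix.of (fun _ _ => (1 : ℝ))) :
    Γ0 = G * Ω0 * G ∧
      ∀ i j, |Ω0 i j - Γ0 i j| ≤ 3 * (p : ℝ)⁻¹ * ⨆ j', ∑ i', |Ω0 i' j'| := by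
  have hG_eq : G = centeringMatrix (Fin p) := by rw [hG, centeringMatrix, Fintype.card_fin]
  have hW_eq : W = fun x => (centeringMatrix (Fin p)).mulVec (Y x) := by
    ext x i
    rw [hW, centeringMatrix_mulVec_apply, Fintype.card_fin]
  have hΩ_eq : Ω0 = Matrix.of fun k l => cov μ (fun x => Y x k) (fun x => Y x l) :=
    Matrix.ext hΩ
  have hΓ_eq : Γ0 = G * Ω0 * G := by
    ext i j
    rw [hΓ, hW_eq, cov_mulVec_apply _ hY, ← hΩ_eq, centeringMatrix_transpose, hG_eq]
  have hΩ_symm : Ω0.IsSymm := by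
    ext i j
    rw [hΩ_eq, Matrix.transpose_apply, Matrix.of_apply, Matrix.of_apply, cov_comm]
  refine ⟨hΓ_eq, fun i j => ?_⟩
  simpa only [hΓ_eq, hG_eq, Fintype.card_fin] using
    abs_sub_centeringMatrix_mul_mul_apply_le hΩ_symm i j

/-- Let `Ω0` be the covariance matrix of `Y = (Y_1,…,Y_p)` and `Γ0`
the covariance matrix of `W`, where `W_i = Y_i − p⁻¹ ∑_k Y_k`. Then
`Γ0 = G Ω0 G` with `G = I_p − p⁻¹ 1 1ᵀ`, and consequently
`‖Ω0 − Γ0‖_max ≤ 3 p⁻¹ ‖Ω0‖_1`. -/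
theorem stmt_2 {α : Type*} [MeasurableSpace α] (μ : Measure α) [IsProbabilityMeasure μ]
    (p : ℕ) (hp : 0 < p) (Y W : α → Fin p → ℝ)
    (hY : ∀ i, MemLp (fun x => Y x i) 2 μ)
    (hW : ∀ x i, W x i = Y x i - (p : ℝ)⁻¹ * ∑ k, Y x k)
    (Ω0 Γ0 G : Matrix (Fin p) (Fin p) ℝ)
    (hΩ : ∀ i j, Ω0 i j = cov μ (fun x => Y x i) (fun x => Y x j))
    (hΓ : ∀ i j, Γ0 i j = cov μ (fun x => W x i) (fun x => W x j))
    (hG : G = 1 - (p : ℝ)⁻¹ • Matrix.of (fun _ _ => (1 : ℝ))) :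
    Γ0 = G * Ω0 * G ∧
      ∀ i j, |Ω0 i j - Γ0 i j| ≤ 3 * (p : ℝ)⁻¹ * ⨆ j', ∑ i', |Ω0 i' j'| :=
  stmt_2_general μ p Y W hY hW Ω0 Γ0 G hΩ hΓ hG
end

section
/- Let τ_λ be any thresholding function satisfying: (i) |τ_λ(z)| ≤ |y| whenever |y−z| ≤ λ, (ii) τ_λ(z)=0 for |z| ≤ λ, (iii) |τ_λ(z)−z| ≤ λ. Suppose |γ̂_ij − ω_ij| ≤ λ_ij for all j. Then Σ_{j=1}^p |τ_{λ_ij}(γ̂_ij) − ω_ij| ≤ (4 + 2^{1−q}) Σ_{j=1}^p λ_ij^{1−q} |ω_ij|^q for any 0 ≤ q < 1. -/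
/-- Let `τ` be a family of thresholding functions (one for each
threshold level `λ > 0`) satisfying (i) `|τ_λ(z)| ≤ |y|` whenever `|y − z| ≤ λ`,
(ii) `τ_λ(z) = 0` for `|z| ≤ λ`, (iii) `|τ_λ(z) − z| ≤ λ`. Suppose
`|γ̂_j − ω_j| ≤ λ_j` for all `j`. Then
`∑_j |τ_{λ_j}(γ̂_j) − ω_j| ≤ (4 + 2^(1−q)) ∑_j λ_j^(1−q) |ω_j|^q` for `0 ≤ q < 1`. -/
theorem stmt_9 (p : ℕ) (τ : ℝ → ℝ → ℝ)
    (hi : ∀ l : ℝ, 0 < l → ∀ z y : ℝ, |y - z| ≤ l → |τ l z| ≤ |y|)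
    (hii : ∀ l : ℝ, 0 < l → ∀ z : ℝ, |z| ≤ l → τ l z = 0)
    (hiii : ∀ l : ℝ, 0 < l → ∀ z : ℝ, |τ l z - z| ≤ l)
    (γhat ω lam : Fin p → ℝ) (hlam : ∀ j, 0 < lam j)
    (hclose : ∀ j, |γhat j - ω j| ≤ lam j)
    (q : ℝ) (hq0 : 0 ≤ q) (hq1 : q < 1) :
    ∑ j, |τ (lam j) (γhat j) - ω j|
      ≤ (4 + 2 ^ (1 - q)) * ∑ j, lam j ^ (1 - q) * |ω j| ^ q := by
  have h1q : (0:ℝ) < 1 - q := by linarith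
  have h2pos : (0:ℝ) < 2 ^ (1 - q) := Real.rpow_pos_of_pos (by norm_num) _
  have hc : ∀ j, |τ (lam j) (γhat j) - ω j|
      ≤ (4 + 2 ^ (1 - q)) * (lam j ^ (1 - q) * |ω j| ^ q) := by
    intro j
    set l := lam j with hl'
    set g := γhat j with hg'
    set w := ω j with hw'
    have hl : 0 < l := hlam j
    have hcl : |g - w| ≤ l := hclose j
    have hterm : 0 ≤ l ^ (1 - q) * |w| ^ q :=
      mul_nonneg (Real.rpow_nonneg hl.le _) (Real.rpow_nonneg (abs_nonneg _) _)
    by_cases hg : |g| ≤ l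
    · -- thresholded to zero
      have hτ : τ l g = 0 := hii l hl g hg
      have hw2 : |w| ≤ 2 * l := by
        have : |w| ≤ |g| + |g - w| := by
          have := abs_sub (g - w) g
          calc |w| = |g - (g - w)| := by ring_nf
            _ ≤ |g| + |g - w| := abs_sub _ _
        linarith
      have hwsplit : |w| = |w| ^ (1 - q) * |w| ^ q := by
        rcases eq_or_ne w 0 with h | h
        · simp [h, Real.zero_rpow (ne_of_gt h1q)]
        · rw [← Real.rpow_add (abs_pos.mpr h)]
          norm_num
      have h1 : |w| ^ (1 - q) ≤ (2 * l) ^ (1 - q) :=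
        Real.rpow_le_rpow (abs_nonneg _) hw2 h1q.le
      have h2 : (2 * l) ^ (1 - q) = 2 ^ (1 - q) * l ^ (1 - q) :=
        Real.mul_rpow (by norm_num) hl.le
      have hwq : 0 ≤ |w| ^ q := Real.rpow_nonneg (abs_nonneg _) _
      calc |τ l g - w| = |w| := by rw [hτ]; rw [zero_sub, abs_neg]
        _ = |w| ^ (1 - q) * |w| ^ q := hwsplit
        _ ≤ (2 * l) ^ (1 - q) * |w| ^ q := by
            exact mul_le_mul_of_nonneg_right h1 hwq
        _ = 2 ^ (1 - q) * (l ^ (1 - q) * |w| ^ q) := by rw [h2]; ring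
        _ ≤ (4 + 2 ^ (1 - q)) * (l ^ (1 - q) * |w| ^ q) := by nlinarith
    · -- |g| > l
      push_neg at hg
      have hτw : |τ l g| ≤ |w| := by
        apply hi l hl g w
        rw [abs_sub_comm]; exact hcl
      have hτg : |τ l g - g| ≤ l := hiii l hl g
      have hb1 : |τ l g - w| ≤ 2 * l := by
        calc |τ l g - w| = |(τ l g - g) + (g - w)| := by ring_nf
          _ ≤ |τ l g - g| + |g - w| := abs_add_le _ _
          _ ≤ 2 * l := by linarith
      have hb2 : |τ l g - w| ≤ 2 * |w| := by
        calc |τ l g - w| ≤ |τ l g| + |w| := abs_sub _ _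
          _ ≤ 2 * |w| := by linarith
      have hwpos : 0 < |w| := by
        have : |g| - |g - w| ≤ |w| := by
          have h := abs_sub (g - w) g
          calc |g| - |g - w| ≤ |g - (g - w)| := by
                have := abs_sub_abs_le_abs_sub g (g - w)
                have h2 : g - (g - w) = w := by ring
                linarith [abs_sub_abs_le_abs_sub g (g - w), le_abs_self (|g| - |g - w|)]
            _ = |w| := by ring_nf
        linarith
      set m := min l |w| with hm'
      have hmpos : 0 < m := lt_min hl hwpos
      have hbm : |τ l g - w| ≤ 2 * m := by
        rcases min_cases l |w| with ⟨h, _⟩ | ⟨h, _⟩ <;> rw [hm', h] <;> linarith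
      have hmsplit : m = m ^ (1 - q) * m ^ q := by
        rw [← Real.rpow_add hmpos]; norm_num
      have h1 : m ^ (1 - q) ≤ l ^ (1 - q) :=
        Real.rpow_le_rpow hmpos.le (min_le_left _ _) h1q.le
      have h2 : m ^ q ≤ |w| ^ q :=
        Real.rpow_le_rpow hmpos.le (min_le_right _ _) hq0
      have hmfin : m ≤ l ^ (1 - q) * |w| ^ q := by
        rw [hmsplit]
        exact mul_le_mul h1 h2 (Real.rpow_nonneg hmpos.le _) (Real.rpow_nonneg hl.le _)
      calc |τ l g - w| ≤ 2 * m := hbm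
        _ ≤ 2 * (l ^ (1 - q) * |w| ^ q) := by linarith
        _ ≤ (4 + 2 ^ (1 - q)) * (l ^ (1 - q) * |w| ^ q) := by nlinarith
  calc ∑ j, |τ (lam j) (γhat j) - ω j|
      ≤ ∑ j, (4 + 2 ^ (1 - q)) * (lam j ^ (1 - q) * |ω j| ^ q) :=
        Finset.sum_le_sum fun j _ => hc j
    _ = (4 + 2 ^ (1 - q)) * ∑ j, lam j ^ (1 - q) * |ω j| ^ q := by
        rw [Finset.mul_sum]
end

section
/- For a single entry: if |ẑ − ω| ≤ λ and τ_λ satisfies properties (i)-(iii) of a thresholding function, then |τ_λ(ẑ) − ω| ≤ 2λ·I(|ω| ≥ λ) + 2|ω|·I(|ω| < λ) + |ω|·I(|ω| < 2λ); in particular |τ_λ(ẑ) − ω| ≤ (4 + 2^{1−q}) λ^{1−q} |ω|^q for any q ∈ [0,1). -/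
/-- For a single entry: if `|ẑ − ω| ≤ λ` and `τ` satisfies properties
(i)–(iii) of a thresholding function at level `λ`, then
`|τ(ẑ) − ω| ≤ 2λ·I(|ω| ≥ λ) + 2|ω|·I(|ω| < λ) + |ω|·I(|ω| < 2λ)`;
in particular `|τ(ẑ) − ω| ≤ (4 + 2^(1−q)) λ^(1−q) |ω|^q` for any `q ∈ [0,1)`. -/
theorem stmt_10 (τ : ℝ → ℝ) (l zhat ω : ℝ) (hl : 0 < l)
    (hi : ∀ z y : ℝ, |y - z| ≤ l → |τ z| ≤ |y|)
    (hii : ∀ z : ℝ, |z| ≤ l → τ z = 0)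
    (hiii : ∀ z : ℝ, |τ z - z| ≤ l)
    (hclose : |zhat - ω| ≤ l)
    (q : ℝ) (hq0 : 0 ≤ q) (hq1 : q < 1) :
    |τ zhat - ω| ≤ 2 * l * (if l ≤ |ω| then 1 else 0)
        + 2 * |ω| * (if |ω| < l then 1 else 0)
        + |ω| * (if |ω| < 2 * l then 1 else 0) ∧
    |τ zhat - ω| ≤ (4 + 2 ^ (1 - q)) * l ^ (1 - q) * |ω| ^ q := by
  have hA : |τ zhat| ≤ |ω| := hi zhat ω (by rwa [abs_sub_comm] at hclose)
  have h2l : |τ zhat - ω| ≤ 2 * l := by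
    calc |τ zhat - ω| = |(τ zhat - zhat) + (zhat - ω)| := by ring_nf
      _ ≤ |τ zhat - zhat| + |zhat - ω| := abs_add_le _ _
      _ ≤ l + l := add_le_add (hiii zhat) hclose
      _ = 2 * l := by ring
  have h2w : |τ zhat - ω| ≤ 2 * |ω| := by
    calc |τ zhat - ω| ≤ |τ zhat| + |ω| := abs_sub _ _
      _ ≤ |ω| + |ω| := by linarith
      _ = 2 * |ω| := by ring
  constructor
  · split_ifs <;> nlinarith [abs_nonneg ω]
  · by_cases hw : ω = 0
    · have h0 : τ zhat = 0 := by
        have := hA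
        rw [hw] at this
        simp only [abs_zero] at this
        exact abs_eq_zero.mp (le_antisymm this (abs_nonneg _))
      rw [h0, hw]
      simp only [sub_zero, abs_zero]
      positivity
    · have hwpos : 0 < |ω| := abs_pos.mpr hw
      have hlq : l ^ q ≤ l ^ q := le_refl _
      have key : |τ zhat - ω| ≤ 2 * l ^ (1 - q) * |ω| ^ q := by
        rcases le_total l |ω| with h | h
        · have h1 : l = l ^ (1 - q) * l ^ q := by
            rw [← Real.rpow_add hl]; norm_num
          have h2 : l ^ q ≤ |ω| ^ q := Real.rpow_le_rpow hl.le h hq0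
          have h3 : (0:ℝ) < l ^ (1 - q) := Real.rpow_pos_of_pos hl _
          nlinarith
        · have h1 : |ω| = |ω| ^ (1 - q) * |ω| ^ q := by
            rw [← Real.rpow_add hwpos]; norm_num
          have h2 : |ω| ^ (1 - q) ≤ l ^ (1 - q) :=
            Real.rpow_le_rpow hwpos.le h (by linarith)
          have h3 : (0:ℝ) < |ω| ^ q := Real.rpow_pos_of_pos hwpos _
          nlinarith
      have hpos : (0:ℝ) < 2 ^ (1 - q) := Real.rpow_pos_of_pos (by norm_num) _
      have hl1 : (0:ℝ) < l ^ (1 - q) := Real.rpow_pos_of_pos hl _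
      have hw1 : (0:ℝ) < |ω| ^ q := Real.rpow_pos_of_pos hwpos _
      nlinarith [mul_pos hl1 hw1, mul_pos hpos (mul_pos hl1 hw1)]
end
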